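/- Let m ≥ 0 with (m+2)γ > 1. Then for all t ≥ 1, ∫ₜ^∞ s^{-γ} Q_m(s) ds ≤ P_m(t), where Q_m(t) = ∫₁^∞ s^{-γ}(max(t,s))^{-1} h(s)^m ds and P_m(t) = ∫₁^∞ s^{-γ} h(max(t,s)) h(s)^m ds. -/

import Mathlib

/-!
Write `Q` as an integral and swap the two integrations (Tonelli): the left-hand side becomes
`∫_{u>1} u^{-γ} h(u)^m ∫_{s>t} s^{-γ} max(s,u)⁻¹ ds du`. For `s > t` we have
`max(s,u) = max(max(t,u), s)`, so the inner integral is at most `h(max(t,u))`, which is the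
integrand of `P_m(t)`. Comparing lower integrals of norms, only that integrand has to be
integrable; this follows from `(m+2)γ > 1` and the decay `h(u) ≲ u^{-δ}` with `δ = 1/(m+2)`.
-/

open MeasureTheory Real

noncomputable def h0 (γ t : ℝ) : ℝ := ∫ s in (1:ℝ)..t, s ^ (-γ)

noncomputable def hfun (γ t : ℝ) : ℝ := ∫ s in Set.Ioi (1:ℝ), s ^ (-γ) * (max t s)⁻¹

noncomputable def Nfun (γ : ℝ) (m : ℕ) (t : ℝ) : ℝ := ∫ s in (1:ℝ)..t, s ^ (-γ) * (hfun γ s) ^ m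

noncomputable def Qfun (γ : ℝ) (m : ℕ) (t : ℝ) : ℝ :=
  ∫ s in Set.Ioi (1:ℝ), s ^ (-γ) * (max t s)⁻¹ * (hfun γ s) ^ m

noncomputable def Pfun (γ : ℝ) (m : ℕ) (t : ℝ) : ℝ :=
  ∫ s in Set.Ioi (1:ℝ), s ^ (-γ) * hfun γ (max t s) * (hfun γ s) ^ m

noncomputable def Rfun (γ : ℝ) (m : ℕ) (t : ℝ) : ℝ :=
  ∫ s in Set.Ioi t, s ^ (-2 : ℝ) * Pfun γ m s

open Set

theorem MeasureTheory.integral_le_integral_of_lintegral_enorm_le {α β : Type*}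
    [MeasurableSpace α] [MeasurableSpace β] {μ : Measure α} {ν : Measure β} {f : α → ℝ}
    {g : β → ℝ} (hg : Integrable g ν) (hg0 : 0 ≤ᵐ[ν] g)
    (h : ∫⁻ a, ‖f a‖ₑ ∂μ ≤ ∫⁻ b, ‖g b‖ₑ ∂ν) : ∫ a, f a ∂μ ≤ ∫ b, g b ∂ν :=
  calc ∫ a, f a ∂μ ≤ ‖∫ a, f a ∂μ‖ₑ.toReal := le_norm_self _
    _ ≤ (∫⁻ a, ‖f a‖ₑ ∂μ).toReal :=
        ENNReal.toReal_mono (h.trans_lt hg.2).ne (enorm_integral_le_lintegral_enorm f)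
    _ ≤ (∫⁻ b, ‖g b‖ₑ ∂ν).toReal := ENNReal.toReal_mono hg.2.ne h
    _ = ∫ b, ‖g b‖ ∂ν := (integral_norm_eq_lintegral_enorm hg.1).symm
    _ = ∫ b, g b ∂ν := integral_congr_ae (hg0.mono fun _ hb => Real.norm_of_nonneg hb)

lemma rpow_neg_mul_inv_eq_rpow {s : ℝ} (hs : 0 < s) (γ : ℝ) : s ^ (-γ) * s⁻¹ = s ^ (-γ - 1) := by
  rw [sub_eq_add_neg, Real.rpow_add hs, Real.rpow_neg_one]

lemma max_inv_le_rpow_mul_rpow {δ u s : ℝ} (hδ0 : 0 ≤ δ) (hδ1 : δ ≤ 1) (hu : 0 < u)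
    (hs : 0 < s) : (max u s)⁻¹ ≤ u ^ (-δ) * s ^ (δ - 1) := by
  have hsplit : ∀ {x : ℝ}, 0 < x → x⁻¹ = x ^ (-δ) * x ^ (δ - 1) := fun hx => by
    rw [← Real.rpow_add hx, show -δ + (δ - 1) = -1 by ring, Real.rpow_neg_one]
  rcases le_total s u with h | h
  · rw [max_eq_left h, hsplit hu]
    exact mul_le_mul_of_nonneg_left (rpow_le_rpow_of_nonpos hs h (by linarith)) (by positivity)
  · rw [max_eq_right h, hsplit hs]
    exact mul_le_mul_of_nonneg_right (rpow_le_rpow_of_nonpos hu h (by linarith)) (by positivity)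

section hfun

variable {γ : ℝ}

lemma integrableOn_rpow_neg_mul_max_inv (hγ : 0 < γ) (x : ℝ) :
    IntegrableOn (fun s : ℝ => s ^ (-γ) * (max x s)⁻¹) (Ioi 1) := by
  refine (integrableOn_Ioi_rpow_of_lt (by linarith : -γ - 1 < -1) one_pos).mono'
    (by fun_prop : Measurable fun s : ℝ => s ^ (-γ) * (max x s)⁻¹).aestronglyMeasurable ?_
  filter_upwards [ae_restrict_mem measurableSet_Ioi] with s hs
  have hs0 : (0:ℝ) < s := one_pos.trans hs
  rw [Real.norm_of_nonneg (by positivity), ← rpow_neg_mul_inv_eq_rpow hs0]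
  gcongr
  exact le_max_right x s

lemma hfun_nonneg (x : ℝ) : 0 ≤ hfun γ x :=
  setIntegral_nonneg measurableSet_Ioi fun s (hs : 1 < s) => by
    have : 0 < max x s := (one_pos.trans hs).trans_le (le_max_right x s)
    positivity

lemma hfun_antitone (hγ : 0 < γ) : Antitone (hfun γ) := fun a b hab =>
  setIntegral_mono_on (integrableOn_rpow_neg_mul_max_inv hγ b)
    (integrableOn_rpow_neg_mul_max_inv hγ a) measurableSet_Ioi fun s (hs : 1 < s) => by
      have hs0 : 0 < s := one_pos.trans hs
      have : 0 < max a s := hs0.trans_le (le_max_right a s)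
      gcongr

lemma hfun_le_mul_rpow_neg {δ : ℝ} (hδ0 : 0 < δ) (hδγ : δ < γ) (hδ1 : δ ≤ 1) {u : ℝ}
    (hu : 0 < u) : hfun γ u ≤ (γ - δ)⁻¹ * u ^ (-δ) := by
  have ha : δ - 1 - γ < -1 := by linarith
  calc hfun γ u ≤ ∫ s in Ioi (1:ℝ), u ^ (-δ) * s ^ (δ - 1 - γ) := by
        refine setIntegral_mono_on (integrableOn_rpow_neg_mul_max_inv (hδ0.trans hδγ) u)
          ((integrableOn_Ioi_rpow_of_lt ha one_pos).const_mul _) measurableSet_Ioi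
          fun s (hs : 1 < s) => ?_
        have hs0 : 0 < s := one_pos.trans hs
        calc s ^ (-γ) * (max u s)⁻¹ ≤ s ^ (-γ) * (u ^ (-δ) * s ^ (δ - 1)) := by
              gcongr; exact max_inv_le_rpow_mul_rpow hδ0.le hδ1 hu hs0
          _ = u ^ (-δ) * s ^ (δ - 1 - γ) := by
              rw [show δ - 1 - γ = -γ + (δ - 1) by ring, Real.rpow_add hs0]; ring
    _ = (γ - δ)⁻¹ * u ^ (-δ) := by
        rw [integral_const_mul, integral_Ioi_rpow_of_lt ha one_pos, Real.one_rpow,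
          show δ - 1 - γ + 1 = -(γ - δ) by ring, div_neg, neg_div, neg_neg, one_div, mul_comm]

lemma integrableOn_rpow_neg_mul_hfun_pow {m : ℕ} (hγ : 0 < γ) (hm : 1 < ((m : ℝ) + 2) * γ) :
    IntegrableOn (fun u : ℝ => u ^ (-γ) * hfun γ u ^ (m + 1)) (Ioi 1) := by
  -- For this `δ`, both `δ < γ` and `γ + (m + 1) δ > 1` are equivalent to `hm`.
  set δ : ℝ := ((m : ℝ) + 2)⁻¹
  have hmδ : ((m : ℝ) + 2) * δ = 1 := mul_inv_cancel₀ (by positivity)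
  have hδ0 : 0 < δ := by positivity
  have hδγ : δ < γ := by nlinarith
  have hδ1 : δ ≤ 1 := by nlinarith [(m.cast_nonneg : (0 : ℝ) ≤ m)]
  have ha : -γ - ((m : ℝ) + 1) * δ < -1 := by nlinarith
  refine ((integrableOn_Ioi_rpow_of_lt ha one_pos).const_mul ((γ - δ)⁻¹ ^ (m + 1))).mono'
    ((measurable_id.pow_const _).mul
      ((hfun_antitone hγ).measurable.pow_const _)).aestronglyMeasurable ?_
  filter_upwards [ae_restrict_mem measurableSet_Ioi] with u (hu : 1 < u)
  have hu0 : 0 < u := one_pos.trans hu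
  have := hfun_nonneg (γ := γ) u
  rw [Real.norm_of_nonneg (by positivity)]
  calc u ^ (-γ) * hfun γ u ^ (m + 1) ≤ u ^ (-γ) * ((γ - δ)⁻¹ * u ^ (-δ)) ^ (m + 1) := by
        gcongr; exact hfun_le_mul_rpow_neg hδ0 hδγ hδ1 hu0
    _ = (γ - δ)⁻¹ ^ (m + 1) * u ^ (-γ - ((m : ℝ) + 1) * δ) := by
        rw [mul_pow, ← Real.rpow_natCast (u ^ (-δ)), ← Real.rpow_mul hu0.le,
          show -γ - ((m : ℝ) + 1) * δ = -γ + -δ * ((m + 1 : ℕ) : ℝ) by push_cast; ring,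
          Real.rpow_add hu0]
        ring

lemma Pfun_integrand_nonneg {m : ℕ} (t : ℝ) {u : ℝ} (hu : 0 < u) :
    0 ≤ u ^ (-γ) * hfun γ (max t u) * hfun γ u ^ m := by
  have := hfun_nonneg (γ := γ) u
  have := hfun_nonneg (γ := γ) (max t u)
  positivity

lemma integrableOn_Pfun_integrand {m : ℕ} (hγ : 0 < γ) (hm : 1 < ((m : ℝ) + 2) * γ) (t : ℝ) :
    IntegrableOn (fun u : ℝ => u ^ (-γ) * hfun γ (max t u) * hfun γ u ^ m) (Ioi 1) := by
  have hmeas := (hfun_antitone hγ).measurable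
  refine (integrableOn_rpow_neg_mul_hfun_pow hγ hm).mono'
    (((measurable_id.pow_const _).mul (hmeas.comp (measurable_const.max measurable_id))).mul
      (hmeas.pow_const _)).aestronglyMeasurable ?_
  filter_upwards [ae_restrict_mem measurableSet_Ioi] with u (hu : 1 < u)
  have hu0 : 0 < u := one_pos.trans hu
  have := hfun_nonneg (γ := γ) u
  rw [Real.norm_of_nonneg (Pfun_integrand_nonneg t hu0), pow_succ, ← mul_assoc, mul_right_comm]
  gcongr
  exact hfun_antitone hγ (le_max_right t u)

lemma setLIntegral_Ioi_enorm_le_hfun (hγ : 0 < γ) {t : ℝ} (ht : 1 ≤ t) (x : ℝ) :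
    ∫⁻ s in Ioi t, ‖s ^ (-γ) * (max x s)⁻¹‖ₑ ≤ ‖hfun γ x‖ₑ := by
  have hnorm : ∫ s in Ioi (1:ℝ), ‖s ^ (-γ) * (max x s)⁻¹‖ = hfun γ x :=
    setIntegral_congr_fun measurableSet_Ioi fun s (hs : 1 < s) => by
      have : 0 < max x s := (one_pos.trans hs).trans_le (le_max_right x s)
      exact Real.norm_of_nonneg (by positivity)
  calc ∫⁻ s in Ioi t, ‖s ^ (-γ) * (max x s)⁻¹‖ₑ
      ≤ ∫⁻ s in Ioi 1, ‖s ^ (-γ) * (max x s)⁻¹‖ₑ := lintegral_mono_set (Ioi_subset_Ioi ht)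
    _ = ‖hfun γ x‖ₑ := by
        rw [← ofReal_integral_norm_eq_lintegral_enorm (integrableOn_rpow_neg_mul_max_inv hγ x),
          hnorm, Real.enorm_of_nonneg (hfun_nonneg x)]

lemma setLIntegral_Ioi_enorm_Qfun_integrand_le {m : ℕ} (hγ : 0 < γ) {t : ℝ} (ht : 1 ≤ t) (u : ℝ) :
    ∫⁻ s in Ioi t, ‖s ^ (-γ)‖ₑ * ‖u ^ (-γ) * (max s u)⁻¹ * hfun γ u ^ m‖ₑ
      ≤ ‖u ^ (-γ) * hfun γ (max t u) * hfun γ u ^ m‖ₑ :=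
  calc ∫⁻ s in Ioi t, ‖s ^ (-γ)‖ₑ * ‖u ^ (-γ) * (max s u)⁻¹ * hfun γ u ^ m‖ₑ
      = ∫⁻ s in Ioi t, ‖u ^ (-γ) * hfun γ u ^ m‖ₑ * ‖s ^ (-γ) * (max (max t u) s)⁻¹‖ₑ :=
        setLIntegral_congr_fun measurableSet_Ioi fun s (hs : t < s) => by
          rw [max_right_comm, max_eq_right hs.le]
          simp only [enorm_mul]
          ring
    _ = ‖u ^ (-γ) * hfun γ u ^ m‖ₑ * ∫⁻ s in Ioi t, ‖s ^ (-γ) * (max (max t u) s)⁻¹‖ₑ :=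
        lintegral_const_mul' _ _ enorm_ne_top
    _ ≤ ‖u ^ (-γ) * hfun γ u ^ m‖ₑ * ‖hfun γ (max t u)‖ₑ := by
        gcongr; exact setLIntegral_Ioi_enorm_le_hfun hγ ht _
    _ = ‖u ^ (-γ) * hfun γ (max t u) * hfun γ u ^ m‖ₑ := by
        simp only [enorm_mul]; ring

end hfun

theorem stmt_15_general (γ t : ℝ) (hγ : 0 < γ) (ht : 1 ≤ t) (m : ℕ)
    (hm : 1 < ((m : ℝ) + 2) * γ) :
    (∫ s in Set.Ioi t, s ^ (-γ) * Qfun γ m s) ≤ Pfun γ m t := by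
  have hmeas : Measurable (hfun γ) := (hfun_antitone hγ).measurable
  refine integral_le_integral_of_lintegral_enorm_le (integrableOn_Pfun_integrand hγ hm t)
    (ae_restrict_of_forall_mem measurableSet_Ioi fun u (hu : 1 < u) =>
      Pfun_integrand_nonneg t (one_pos.trans hu)) ?_
  calc ∫⁻ s in Ioi t, ‖s ^ (-γ) * Qfun γ m s‖ₑ
      ≤ ∫⁻ s in Ioi t, ∫⁻ u in Ioi 1, ‖s ^ (-γ)‖ₑ * ‖u ^ (-γ) * (max s u)⁻¹ * hfun γ u ^ m‖ₑ :=
        lintegral_mono fun s => by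
          rw [enorm_mul, lintegral_const_mul' _ _ enorm_ne_top]
          gcongr
          exact enorm_integral_le_lintegral_enorm _
    _ = ∫⁻ u in Ioi 1, ∫⁻ s in Ioi t, ‖s ^ (-γ)‖ₑ * ‖u ^ (-γ) * (max s u)⁻¹ * hfun γ u ^ m‖ₑ :=
        lintegral_lintegral_swap (by fun_prop)
    _ ≤ ∫⁻ u in Ioi 1, ‖u ^ (-γ) * hfun γ (max t u) * hfun γ u ^ m‖ₑ :=
        lintegral_mono fun u => setLIntegral_Ioi_enorm_Qfun_integrand_le hγ ht u

theorem stmt_15 (γ t : ℝ) (hγ : 0 < γ) (hγ1 : γ ≤ 1) (ht : 1 ≤ t) (m : ℕ)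
    (hm : 1 < ((m : ℝ) + 2) * γ) :
    (∫ s in Set.Ioi t, s ^ (-γ) * Qfun γ m s) ≤ Pfun γ m t :=
  stmt_15_general γ t hγ ht m hm
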